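/- arXiv:2009.10071 — 2 statements merged into one kernel-verified Lean document; each statement's English description precedes it below -/
import Mathlib

section
/- (Recovering dR from its symmetrized form) If R is n×n upper triangular invertible, dR is upper triangular, and S := sym(dR R⁻¹), then dR = (S ∘ Eᵀ) R, where E is the masking matrix with e_{ij} = 0 for i < j, 1 for i = j, 2 for i > j. -/
/-
An upper triangular `M` is recovered from `sym M` by keeping the diagonal and doubling the
strictly upper part, which is what the mask `Eᵀ` does. Since `dR * R⁻¹` is upper triangular
(inverses and products of upper triangular matrices are), applying this to `M = dR * R⁻¹` and
multiplying by `R` on the right gives `dR`.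
-/

open Matrix

noncomputable def symm' {n : ℕ} (A : Matrix (Fin n) (Fin n) ℝ) : Matrix (Fin n) (Fin n) ℝ :=
  (1 / 2 : ℝ) • (A + Aᵀ)

def maskE (n : ℕ) : Matrix (Fin n) (Fin n) ℝ :=
  fun i j => if i < j then 0 else if i = j then 1 else 2

theorem symm'_hadamard_transpose_maskE {n : ℕ} {M : Matrix (Fin n) (Fin n) ℝ}
    (hM : M.BlockTriangular id) : symm' M ⊙ (maskE n)ᵀ = M := by
  ext i j
  simp only [hadamard_apply, symm', maskE, transpose_apply, Matrix.smul_apply, Matrix.add_apply,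
    smul_eq_mul]
  rcases lt_trichotomy i j with hij | rfl | hji
  · rw [if_neg (not_lt.2 hij.le), if_neg hij.ne', hM hij]
    ring
  · simp only [lt_irrefl, if_false, if_true]
    ring
  · rw [if_pos hji, hM hji]
    ring

/-- Recovering dR from its symmetrized form: dR = (sym(dR R⁻¹) ∘ Eᵀ) R. -/
theorem recover_dR (n : ℕ) (R dR : Matrix (Fin n) (Fin n) ℝ)
    (hR : ∀ i j : Fin n, j < i → R i j = 0) (hdR : ∀ i j : Fin n, j < i → dR i j = 0)
    (hinv : IsUnit R.det) :
    dR = Matrix.hadamard (symm' (dR * R⁻¹)) (maskE n)ᵀ * R := by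
  have := R.invertibleOfIsUnitDet hinv
  have hRinv : R⁻¹.BlockTriangular id :=
    blockTriangular_inv_of_blockTriangular fun i j h => hR i j h
  have hM : (dR * R⁻¹).BlockTriangular id := BlockTriangular.mul (fun i j h => hdR i j h) hRinv
  rw [symm'_hadamard_transpose_maskE hM, Matrix.mul_assoc, nonsing_inv_mul R hinv, Matrix.mul_one]
end

section
/- If U and dU are n×n lower triangular matrices with U invertible, then U⁻¹ dU is lower triangular, and dU = U (sym(U⁻¹ dU) ∘ E), where E is the masking matrix with e_{ij} = 0 for i < j, 1 for i = j, 2 for i > j. -/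
open Matrix

/-- U⁻¹ dU is lower triangular and dU = U (sym(U⁻¹ dU) ∘ E). -/
theorem recover_dU (n : ℕ) (U dU : Matrix (Fin n) (Fin n) ℝ)
    (hU : ∀ i j : Fin n, i < j → U i j = 0) (hdU : ∀ i j : Fin n, i < j → dU i j = 0)
    (hinv : IsUnit U.det) :
    (∀ i j : Fin n, i < j → (U⁻¹ * dU) i j = 0) ∧
      dU = U * Matrix.hadamard (symm' (U⁻¹ * dU)) (maskE n) := by
  haveI : Invertible U := U.invertibleOfIsUnitDet hinv
  have hUbt : U.BlockTriangular (OrderDual.toDual : Fin n → (Fin n)ᵒᵈ) := by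
    intro i j h
    exact hU i j (by exact h)
  have hdUbt : dU.BlockTriangular (OrderDual.toDual : Fin n → (Fin n)ᵒᵈ) := by
    intro i j h
    exact hdU i j (by exact h)
  have hL : ∀ i j : Fin n, i < j → (U⁻¹ * dU) i j = 0 := by
    intro i j h
    exact (Matrix.blockTriangular_inv_of_blockTriangular hUbt).mul hdUbt (show
      (OrderDual.toDual j : (Fin n)ᵒᵈ) < OrderDual.toDual i from h)
  refine ⟨hL, ?_⟩
  have hHad : Matrix.hadamard (symm' (U⁻¹ * dU)) (maskE n) = U⁻¹ * dU := by
    ext i j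
    simp only [Matrix.hadamard_apply, symm', maskE, Matrix.smul_apply, Matrix.add_apply,
      Matrix.transpose_apply, smul_eq_mul]
    rcases lt_trichotomy i j with h | h | h
    · simp [h, hL i j h]
    · simp [h]; ring
    · have : ¬ i < j := not_lt.2 h.le
      simp [this, h.ne', hL j i h]
      ring
  rw [hHad, Matrix.mul_nonsing_inv_cancel_left _ _ hinv]
end
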